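/- arXiv:1612.08384 — 4 statements merged into one kernel-verified Lean document; each statement's English description precedes it below -/
import Mathlib

section
/- Let 0 < ρ < 1 and let a_n(δ) = n³ ρ_z^{2n}/(δ² + ρ^{4n}) for 0 < ρ_z < 1. If ρ_z > ρ², then there exist constants C₁, C₂ > 0 such that for all sufficiently small δ > 0, C₁ |ln δ|³ δ^{(ln ρ_z)/(ln ρ) - 2} ≤ Σ_{n=1}^∞ a_n(δ) ≤ C₂ |ln δ|³ δ^{(ln ρ_z)/(ln ρ) - 2}. -/
set_option maxHeartbeats 1000000


open Filter Real Set

theorem energy_series_asymptotics (ρ ρz : ℝ) (hρ0 : 0 < ρ) (hρ1 : ρ < 1)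
    (hρz0 : 0 < ρz) (hρz1 : ρz < 1) (h : ρ ^ 2 < ρz) :
    ∃ C₁ > (0:ℝ), ∃ C₂ > (0:ℝ), ∀ᶠ δ : ℝ in nhdsWithin 0 (Ioi 0),
      C₁ * |Real.log δ| ^ 3 * δ ^ (Real.log ρz / Real.log ρ - 2) ≤
        (∑' n : ℕ, (n : ℝ) ^ 3 * ρz ^ (2 * n) / (δ ^ 2 + ρ ^ (4 * n))) ∧
      (∑' n : ℕ, (n : ℝ) ^ 3 * ρz ^ (2 * n) / (δ ^ 2 + ρ ^ (4 * n))) ≤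
        C₂ * |Real.log δ| ^ 3 * δ ^ (Real.log ρz / Real.log ρ - 2) := by
  have hA : Real.log ρ < 0 := Real.log_neg hρ0 hρ1
  have hB : Real.log ρz < 0 := Real.log_neg hρz0 hρz1
  set A := Real.log ρ with hAdef
  set B := Real.log ρz with hBdef
  have hAne : A ≠ 0 := ne_of_lt hA
  have hmA : 0 < -A := by linarith
  set r := ρz ^ 2 with hrdef
  set p := ρ ^ 4 with hpdef
  have hr0 : 0 < r := pow_pos hρz0 2
  have hr1 : r < 1 := pow_lt_one₀ hρz0.le hρz1 two_ne_zero
  have hp0 : 0 < p := pow_pos hρ0 4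
  have hpr : p < r := by
    have hh : p = (ρ ^ 2) ^ 2 := by rw [hpdef]; ring
    rw [hh, hrdef]
    exact pow_lt_pow_left₀ h (by positivity) two_ne_zero
  set q := r / p with hqdef
  have hq1 : 1 < q := (one_lt_div hp0).mpr hpr
  have hq0 : 0 < q := by linarith
  have hq1' : 0 < q - 1 := by linarith
  have hlogr : Real.log r = 2 * B := by rw [hrdef, Real.log_pow]; push_cast; ring
  have powexp : ∀ (x : ℝ), 0 < x → ∀ n : ℕ, x ^ n = Real.exp ((n : ℝ) * Real.log x) := by
    intro x hx n
    rw [Real.exp_nat_mul, Real.exp_log hx]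
  have hsum0 : Summable (fun n : ℕ => (n : ℝ) ^ 3 * r ^ n) :=
    summable_pow_mul_geometric_of_norm_lt_one 3
      (by rw [Real.norm_eq_abs, abs_of_pos hr0]; exact hr1)
  have hnorm : ‖r‖ < 1 := by rw [Real.norm_eq_abs, abs_of_pos hr0]; exact hr1
  have hsumM : Summable (fun m : ℕ => ((m : ℝ) + 1) ^ 3 * r ^ m) := by
    have g3 := summable_pow_mul_geometric_of_norm_lt_one (R := ℝ) 3 hnorm
    have g2 := summable_pow_mul_geometric_of_norm_lt_one (R := ℝ) 2 hnorm
    have g1 := summable_pow_mul_geometric_of_norm_lt_one (R := ℝ) 1 hnorm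
    have g0 : Summable (fun n : ℕ => r ^ n) := summable_geometric_of_lt_one hr0.le hr1
    refine ((g3.add (g2.mul_left 3)).add ((g1.mul_left 3).add g0)).congr (fun m => ?_)
    ring
  set M := ∑' m : ℕ, ((m : ℝ) + 1) ^ 3 * r ^ m with hMdef
  have hM0 : 0 ≤ M := tsum_nonneg (fun m => by positivity)
  set K := (1 / (2 * (-A)) + 1) ^ 3 with hKdef
  have hK0 : 0 < K := pow_pos (by positivity) 3
  refine ⟨r / (16 * (-A) ^ 3),
    div_pos hr0 (mul_pos (by norm_num) (pow_pos hmA 3)),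
    (q / ((q - 1) * p) + 8 * M) * K,
    mul_pos (add_pos_of_pos_of_nonneg (div_pos hq0 (mul_pos hq1' hp0)) (by linarith)) hK0, ?_⟩
  filter_upwards [Ioo_mem_nhdsGT_of_mem
    (show (0:ℝ) ∈ Ico (0:ℝ) (Real.exp (-1)) from ⟨le_refl _, Real.exp_pos _⟩)] with δ hδ
  obtain ⟨hδ0, hδe⟩ := hδ
  have hδ2 : (0:ℝ) < δ ^ 2 := by positivity
  have hlgneg : Real.log δ < -1 := by
    have hlt := Real.log_lt_log hδ0 hδe
    rwa [Real.log_exp] at hlt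
  set lg := Real.log δ with hlgdef
  have hlg1 : 1 ≤ -lg := by linarith
  have habs : |lg| = -lg := abs_of_neg (by linarith)
  set L := lg / (2 * A) with hLdef
  have hL0 : 0 < L := div_pos_of_neg_of_neg (by linarith) (by linarith)
  set N := ⌈L⌉₊ with hNdef
  have hLN : L ≤ (N : ℝ) := Nat.le_ceil L
  have hNL1 : (N : ℝ) ≤ L + 1 := (Nat.ceil_lt_add_one hL0.le).le
  have hN1 : (1:ℝ) ≤ (N : ℝ) := by
    exact_mod_cast Nat.one_le_ceil_iff.mpr hL0
  have hN0 : (0:ℝ) ≤ (N : ℝ) := by linarith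
  set α := B / A with hαdef
  set D := δ ^ (α - 2) with hDdef
  have hD0 : 0 < D := Real.rpow_pos_of_pos hδ0 _
  have hδα : δ ^ α = D * δ ^ 2 := by
    rw [hDdef, ← Real.rpow_natCast δ 2, ← Real.rpow_add hδ0]
    norm_num
  have hδαexp : δ ^ α = Real.exp (L * (2 * B)) := by
    rw [Real.rpow_def_of_pos hδ0]
    congr 1
    rw [hLdef, hαdef]
    field_simp
    ring
  have e1 : r ^ N = Real.exp ((N : ℝ) * (2 * B)) := by
    rw [powexp r hr0 N, hlogr]
  have hrN_le : r ^ N ≤ δ ^ α := by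
    rw [e1, hδαexp, Real.exp_le_exp]
    exact mul_le_mul_of_nonpos_right hLN (by linarith)
  have hrN_ge : r * δ ^ α ≤ r ^ N := by
    have e2 : r * δ ^ α = Real.exp (2 * B + L * (2 * B)) := by
      rw [hδαexp, Real.exp_add]
      congr 1
      rw [← hlogr, Real.exp_log hr0]
    rw [e1, e2, Real.exp_le_exp]
    have hmm := mul_le_mul_of_nonpos_right hNL1 (show (2:ℝ) * B ≤ 0 by linarith)
    have he : (L + 1) * (2 * B) = 2 * B + L * (2 * B) := by ring
    linarith
  have hlogp : Real.log p = 4 * A := by rw [hpdef, Real.log_pow]; push_cast; ring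
  have e3 : p ^ N = Real.exp ((N : ℝ) * (4 * A)) := by
    rw [powexp p hp0 N, hlogp]
  have e4 : δ ^ 2 = Real.exp (L * (4 * A)) := by
    have he : L * (4 * A) = lg + lg := by rw [hLdef]; field_simp; ring
    rw [he, Real.exp_add, Real.exp_log hδ0]
    ring
  have hpN_le : p ^ N ≤ δ ^ 2 := by
    rw [e3, e4, Real.exp_le_exp]
    exact mul_le_mul_of_nonpos_right hLN (by linarith)
  have hpN_ge : p * δ ^ 2 ≤ p ^ N := by
    have e5 : p * δ ^ 2 = Real.exp (4 * A + L * (4 * A)) := by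
      rw [e4, Real.exp_add]
      congr 1
      rw [← hlogp, Real.exp_log hp0]
    rw [e3, e5, Real.exp_le_exp]
    have hmm := mul_le_mul_of_nonpos_right hNL1 (show (4:ℝ) * A ≤ 0 by linarith)
    have he : (L + 1) * (4 * A) = 4 * A + L * (4 * A) := by ring
    linarith
  have hN3_ge : (-lg) ^ 3 / (8 * (-A) ^ 3) ≤ (N : ℝ) ^ 3 := by
    have h1 : L ^ 3 ≤ (N : ℝ) ^ 3 := pow_le_pow_left₀ hL0.le hLN 3
    have eL : L ^ 3 = (-lg) ^ 3 / (8 * (-A) ^ 3) := by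
      rw [hLdef]
      field_simp
      ring
    linarith
  have hN3_le : (N : ℝ) ^ 3 ≤ K * (-lg) ^ 3 := by
    have h1 : (N : ℝ) ≤ (-lg) * (1 / (2 * (-A)) + 1) := by
      have eL : (-lg) * (1 / (2 * (-A)) + 1) = L + (-lg) := by
        rw [hLdef]
        field_simp
        ring
      rw [eL]
      linarith
    have h2 : (N : ℝ) ^ 3 ≤ ((-lg) * (1 / (2 * (-A)) + 1)) ^ 3 :=
      pow_le_pow_left₀ hN0 h1 3
    rw [mul_pow] at h2
    rw [hKdef]
    linarith
  -- rewrite the series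
  set a : ℕ → ℝ := fun n => (n : ℝ) ^ 3 * r ^ n / (δ ^ 2 + p ^ n) with hadef
  have hfeq : ∀ n : ℕ, (n : ℝ) ^ 3 * ρz ^ (2 * n) / (δ ^ 2 + ρ ^ (4 * n)) = a n := by
    intro n
    simp only [hadef, hrdef, hpdef, ← pow_mul]
  have hts : (∑' n : ℕ, (n : ℝ) ^ 3 * ρz ^ (2 * n) / (δ ^ 2 + ρ ^ (4 * n))) = ∑' n : ℕ, a n :=
    tsum_congr hfeq
  have ha0 : ∀ n, 0 ≤ a n := by
    intro n
    have : (0:ℝ) < δ ^ 2 + p ^ n := by positivity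
    positivity
  have hale : ∀ n, a n ≤ (n : ℝ) ^ 3 * r ^ n / δ ^ 2 := by
    intro n
    exact div_le_div_of_nonneg_left (by positivity) hδ2
      (le_add_of_nonneg_right (by positivity))
  have hsa : Summable a := Summable.of_nonneg_of_le ha0 hale (hsum0.div_const (δ ^ 2))
  rw [hts]
  constructor
  · -- lower bound
    have h1 : a N ≤ ∑' n, a n := Summable.le_tsum hsa N (fun j _ => ha0 j)
    have hden_pos : (0:ℝ) < δ ^ 2 + p ^ N := by positivity
    have hden_le : δ ^ 2 + p ^ N ≤ 2 * δ ^ 2 := by linarith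
    have s1 : (N : ℝ) ^ 3 * (r * δ ^ α) / (2 * δ ^ 2) ≤ a N := by
      rw [hadef]
      exact div_le_div₀ (by positivity)
        (mul_le_mul_of_nonneg_left hrN_ge (by positivity)) hden_pos hden_le
    have s2 : (N : ℝ) ^ 3 * (r * δ ^ α) / (2 * δ ^ 2) = (N : ℝ) ^ 3 * (r * D / 2) := by
      rw [hδα]
      field_simp
    have s3 : (-lg) ^ 3 / (8 * (-A) ^ 3) * (r * D / 2) ≤ (N : ℝ) ^ 3 * (r * D / 2) :=
      mul_le_mul_of_nonneg_right hN3_ge (by positivity)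
    have s4 : r / (16 * (-A) ^ 3) * |lg| ^ 3 * D
        = (-lg) ^ 3 / (8 * (-A) ^ 3) * (r * D / 2) := by
      rw [habs]
      field_simp
      ring
    rw [s4]
    calc (-lg) ^ 3 / (8 * (-A) ^ 3) * (r * D / 2)
        ≤ (N : ℝ) ^ 3 * (r * D / 2) := s3
      _ = (N : ℝ) ^ 3 * (r * δ ^ α) / (2 * δ ^ 2) := s2.symm
      _ ≤ a N := s1
      _ ≤ ∑' n, a n := h1
  · -- upper bound
    have hsplit := Summable.sum_add_tsum_nat_add (f := a) (N + 1) hsa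
    rw [← hsplit]
    have hqN : q ^ N ≤ D / p := by
      have e6 : q ^ N = r ^ N / p ^ N := by rw [hqdef, div_pow]
      have e7 : D / p = δ ^ α / (p * δ ^ 2) := by
        rw [hδα]
        field_simp
      rw [e6, e7]
      exact div_le_div₀ (Real.rpow_pos_of_pos hδ0 _).le hrN_le (by positivity) hpN_ge
    -- Part 1
    have part1 : (∑ i ∈ Finset.range (N + 1), a i)
        ≤ (N : ℝ) ^ 3 * D * (q / ((q - 1) * p)) := by
      have step : ∀ i ∈ Finset.range (N + 1), a i ≤ (N : ℝ) ^ 3 * q ^ i := by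
        intro i hi
        have hiN : (i : ℝ) ≤ (N : ℝ) := by
          exact_mod_cast Nat.lt_succ_iff.mp (Finset.mem_range.mp hi)
        have t1 : a i ≤ (i : ℝ) ^ 3 * r ^ i / p ^ i := by
          rw [hadef]
          exact div_le_div_of_nonneg_left (by positivity) (pow_pos hp0 i)
            (le_add_of_nonneg_left hδ2.le)
        have t2 : (i : ℝ) ^ 3 * r ^ i / p ^ i = (i : ℝ) ^ 3 * q ^ i := by
          rw [hqdef, div_pow]
          ring
        have t3 : (i : ℝ) ^ 3 * q ^ i ≤ (N : ℝ) ^ 3 * q ^ i :=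
          mul_le_mul_of_nonneg_right (pow_le_pow_left₀ (by positivity) hiN 3)
            (by positivity)
        rw [t2] at t1
        exact t1.trans t3
      have s5 : (∑ i ∈ Finset.range (N + 1), a i)
          ≤ ∑ i ∈ Finset.range (N + 1), (N : ℝ) ^ 3 * q ^ i := Finset.sum_le_sum step
      have s6 : (∑ i ∈ Finset.range (N + 1), (N : ℝ) ^ 3 * q ^ i)
          = (N : ℝ) ^ 3 * ((q ^ (N + 1) - 1) / (q - 1)) := by
        rw [← Finset.mul_sum, geom_sum_eq (ne_of_gt hq1)]
      have s7 : (q ^ (N + 1) - 1) / (q - 1) ≤ q ^ N * q / (q - 1) := by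
        refine (div_le_div_iff_of_pos_right hq1').mpr ?_
        rw [pow_succ]
        exact sub_le_self _ zero_le_one
      have s8 : q ^ N * q / (q - 1) ≤ (D / p) * q / (q - 1) :=
        (div_le_div_iff_of_pos_right hq1').mpr (mul_le_mul_of_nonneg_right hqN hq0.le)
      have s9 : (D / p) * q / (q - 1) = D * (q / ((q - 1) * p)) := by
        field_simp
      calc (∑ i ∈ Finset.range (N + 1), a i)
          ≤ (N : ℝ) ^ 3 * ((q ^ (N + 1) - 1) / (q - 1)) := by rw [← s6]; exact s5
        _ ≤ (N : ℝ) ^ 3 * ((D / p) * q / (q - 1)) :=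
            mul_le_mul_of_nonneg_left (s7.trans s8) (by positivity)
        _ = (N : ℝ) ^ 3 * D * (q / ((q - 1) * p)) := by rw [s9]; ring
    -- Part 2
    have part2 : (∑' m : ℕ, a (m + (N + 1))) ≤ (N : ℝ) ^ 3 * D * (8 * M) := by
      have step : ∀ m : ℕ, a (m + (N + 1))
          ≤ 8 * (N : ℝ) ^ 3 * D * (((m : ℝ) + 1) ^ 3 * r ^ m) := by
        intro m
        have t1 : a (m + (N + 1)) ≤ ((m + (N + 1) : ℕ) : ℝ) ^ 3 * r ^ (m + (N + 1)) / δ ^ 2 :=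
          hale _
        have c1 : ((m + (N + 1) : ℕ) : ℝ) ≤ ((m : ℝ) + 1) * (2 * (N : ℝ)) := by
          push_cast
          have hm0 : (0:ℝ) ≤ (m : ℝ) := Nat.cast_nonneg m
          have hmN : (m : ℝ) * 1 ≤ (m : ℝ) * (N : ℝ) := mul_le_mul_of_nonneg_left hN1 hm0
          have hmN0 : (0:ℝ) ≤ (m : ℝ) * (N : ℝ) := mul_nonneg hm0 (by linarith only [hN1])
          linarith only [hm0, hmN, hmN0, hN1]
        have c2 : ((m + (N + 1) : ℕ) : ℝ) ^ 3 ≤ 8 * (N : ℝ) ^ 3 * ((m : ℝ) + 1) ^ 3 := by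
          have := pow_le_pow_left₀ (Nat.cast_nonneg _) c1 3
          calc ((m + (N + 1) : ℕ) : ℝ) ^ 3 ≤ (((m : ℝ) + 1) * (2 * (N : ℝ))) ^ 3 := this
            _ = 8 * (N : ℝ) ^ 3 * ((m : ℝ) + 1) ^ 3 := by ring
        have c3 : r ^ (m + (N + 1)) ≤ r ^ m * δ ^ α := by
          have e8 : r ^ (m + (N + 1)) = r ^ m * r ^ N * r := by rw [pow_add, pow_succ]; ring
          have : r ^ m * r ^ N * r ≤ r ^ m * r ^ N * 1 :=
            mul_le_mul_of_nonneg_left hr1.le (by positivity)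
          rw [e8]
          calc r ^ m * r ^ N * r ≤ r ^ m * r ^ N * 1 := this
            _ = r ^ m * r ^ N := by ring
            _ ≤ r ^ m * δ ^ α := mul_le_mul_of_nonneg_left hrN_le (by positivity)
        have t2 : ((m + (N + 1) : ℕ) : ℝ) ^ 3 * r ^ (m + (N + 1)) / δ ^ 2
            ≤ (8 * (N : ℝ) ^ 3 * ((m : ℝ) + 1) ^ 3) * (r ^ m * δ ^ α) / δ ^ 2 := by
          exact (div_le_div_iff_of_pos_right hδ2).mpr
            (mul_le_mul c2 c3 (by positivity) (by positivity))
        have t3 : (8 * (N : ℝ) ^ 3 * ((m : ℝ) + 1) ^ 3) * (r ^ m * δ ^ α) / δ ^ 2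
            = 8 * (N : ℝ) ^ 3 * D * (((m : ℝ) + 1) ^ 3 * r ^ m) := by
          rw [hδα]
          field_simp
        rw [t3] at t2
        exact t1.trans t2
      have hsl : Summable (fun m : ℕ => a (m + (N + 1))) := (summable_nat_add_iff (N + 1)).2 hsa
      have hsr : Summable (fun m : ℕ => 8 * (N : ℝ) ^ 3 * D * (((m : ℝ) + 1) ^ 3 * r ^ m)) :=
        hsumM.mul_left _
      have := Summable.tsum_le_tsum step hsl hsr
      rw [tsum_mul_left] at this
      calc (∑' m : ℕ, a (m + (N + 1))) ≤ 8 * (N : ℝ) ^ 3 * D * M := this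
        _ = (N : ℝ) ^ 3 * D * (8 * M) := by ring
    have total : (∑ i ∈ Finset.range (N + 1), a i) + (∑' m : ℕ, a (m + (N + 1)))
        ≤ (N : ℝ) ^ 3 * D * (q / ((q - 1) * p) + 8 * M) := by
      have hadd := add_le_add part1 part2
      linarith only [hadd]
    have final : (N : ℝ) ^ 3 * D * (q / ((q - 1) * p) + 8 * M)
        ≤ (q / ((q - 1) * p) + 8 * M) * K * |lg| ^ 3 * D := by
      rw [habs]
      have hc : (0:ℝ) ≤ q / ((q - 1) * p) + 8 * M := by positivity
      have h1 : (N : ℝ) ^ 3 * D ≤ K * (-lg) ^ 3 * D :=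
        mul_le_mul_of_nonneg_right hN3_le hD0.le
      calc (N : ℝ) ^ 3 * D * (q / ((q - 1) * p) + 8 * M)
          ≤ K * (-lg) ^ 3 * D * (q / ((q - 1) * p) + 8 * M) :=
            mul_le_mul_of_nonneg_right h1 hc
        _ = (q / ((q - 1) * p) + 8 * M) * K * (-lg) ^ 3 * D := by ring
    exact total.trans final
end

section
/- Let 0 < ρ < 1 and 0 < ρ_z < ρ. Then δ · Σ_{n=1}^∞ n³ ρ_z^{2n}/(δ² + ρ^{4n}) → 0 as δ → 0⁺. -/
open Filter Set

theorem no_blowup_k0_case (ρ ρz : ℝ) (hρ0 : 0 < ρ) (hρ1 : ρ < 1)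
    (hρz0 : 0 < ρz) (h : ρz < ρ) :
    Tendsto (fun δ : ℝ =>
        δ * ∑' n : ℕ, (n : ℝ) ^ 3 * ρz ^ (2 * n) / (δ ^ 2 + ρ ^ (4 * n)))
      (nhdsWithin 0 (Ioi 0)) (nhds 0) := by
  have key : Tendsto (fun δ : ℝ =>
      ∑' n : ℕ, δ * ((n : ℝ) ^ 3 * ρz ^ (2 * n) / (δ ^ 2 + ρ ^ (4 * n))))
      (nhdsWithin 0 (Ioi 0)) (nhds (∑' _ : ℕ, (0 : ℝ))) := by
    apply tendsto_tsum_of_dominated_convergence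
      (bound := fun n : ℕ => (1 / 2) * ((n : ℝ) ^ 3 * (ρz ^ 2 / ρ ^ 2) ^ n))
    · apply Summable.mul_left
      apply summable_pow_mul_geometric_of_norm_lt_one
      rw [Real.norm_eq_abs, abs_of_pos (by positivity), div_lt_one (by positivity)]
      exact pow_lt_pow_left₀ h hρz0.le two_ne_zero
    · intro n
      have hc : ContinuousAt (fun δ : ℝ =>
          δ * ((n : ℝ) ^ 3 * ρz ^ (2 * n) / (δ ^ 2 + ρ ^ (4 * n)))) 0 := by
        apply ContinuousAt.mul continuousAt_id
        apply ContinuousAt.div continuousAt_const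
        · fun_prop
        · positivity
      have h0 := hc.tendsto
      simp only [zero_mul] at h0
      exact h0.mono_left nhdsWithin_le_nhds
    · filter_upwards [self_mem_nhdsWithin] with δ (hδ : 0 < δ) n
      have ha : (0:ℝ) < ρ ^ (2 * n) := by positivity
      have hd : (0:ℝ) < δ ^ 2 + ρ ^ (4 * n) := by positivity
      have hnum : (0:ℝ) ≤ (n : ℝ) ^ 3 * ρz ^ (2 * n) := by positivity
      rw [Real.norm_eq_abs, abs_of_nonneg (by positivity)]
      have hpow : (ρz ^ 2 / ρ ^ 2) ^ n = ρz ^ (2 * n) / ρ ^ (2 * n) := by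
        rw [div_pow, ← pow_mul, ← pow_mul]
      rw [hpow]
      have h4 : ρ ^ (4 * n) = (ρ ^ (2 * n)) ^ 2 := by rw [← pow_mul]; ring_nf
      have hfrac : δ / (δ ^ 2 + ρ ^ (4 * n)) ≤ 1 / (2 * ρ ^ (2 * n)) := by
        rw [div_le_div_iff₀ hd (by positivity)]
        nlinarith [sq_nonneg (δ - ρ ^ (2 * n))]
      have e1 : δ * ((n : ℝ) ^ 3 * ρz ^ (2 * n) / (δ ^ 2 + ρ ^ (4 * n)))
          = ((n : ℝ) ^ 3 * ρz ^ (2 * n)) * (δ / (δ ^ 2 + ρ ^ (4 * n))) := by ring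
      have e2 : (1 / 2 : ℝ) * ((n : ℝ) ^ 3 * (ρz ^ (2 * n) / ρ ^ (2 * n)))
          = ((n : ℝ) ^ 3 * ρz ^ (2 * n)) * (1 / (2 * ρ ^ (2 * n))) := by
        field_simp
      rw [e1, e2]
      exact mul_le_mul_of_nonneg_left hfrac hnum
  rw [tsum_zero] at key
  apply key.congr
  intro δ
  rw [tsum_mul_left]
end

section
/- Let 0 < ρ < 1 and 0 < ρ_z < 1 with ρ_z² > ρ (i.e. |z| < √(r_e³/r_i)). Then δ · Σ_{n=1}^∞ ρ_z^{2n}/(n(δ² + n² ρ^{2n})) → ∞ as δ → 0⁺. -/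
open Filter Set

set_option maxHeartbeats 1000000

theorem blowup_neg_k0_case (ρ ρz : ℝ) (hρ0 : 0 < ρ) (hρ1 : ρ < 1)
    (hρz0 : 0 < ρz) (hρz1 : ρz < 1) (h : ρ < ρz ^ 2) :
    Tendsto (fun δ : ℝ =>
        δ * ∑' n : ℕ, ρz ^ (2 * n) / ((n : ℝ) * (δ ^ 2 + (n : ℝ) ^ 2 * ρ ^ (2 * n))))
      (nhdsWithin 0 (Ioi 0)) atTop := by
  classical
  set c : ℝ := ρz ^ 2 / ρ with hcdef
  have hc1 : 1 < c := (one_lt_div hρ0).2 h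
  have hc0 : 0 < c := lt_trans one_pos hc1
  rw [tendsto_atTop]
  intro M
  set M' : ℝ := max M 1 with hM'def
  have hM'0 : (0:ℝ) < M' := lt_of_lt_of_le one_pos (le_max_right _ _)
  have hlim := tendsto_pow_const_div_const_pow_of_one_lt 3 hc1
  have hev : ∀ᶠ n : ℕ in atTop, (n : ℝ) ^ 3 / c ^ n < ρ / (2 * M') :=
    hlim.eventually (gt_mem_nhds (show (0:ℝ) < ρ / (2 * M') by positivity))
  obtain ⟨N₀, hN₀⟩ := eventually_atTop.mp hev
  set N₁ : ℕ := max N₀ 1 with hN₁def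
  have hN₁pos : 0 < ρ ^ N₁ := pow_pos hρ0 _
  filter_upwards [Ioo_mem_nhdsGT_of_mem (show (0:ℝ) ∈ Ico 0 (ρ ^ N₁) from ⟨le_refl _, hN₁pos⟩)]
    with δ hδ
  have hδ0 : 0 < δ := hδ.1
  have hδN₁ : δ < ρ ^ N₁ := hδ.2
  -- find minimal N with ρ^N ≤ δ
  have hex : ∃ n : ℕ, ρ ^ n ≤ δ := by
    obtain ⟨n, hn⟩ := exists_pow_lt_of_lt_one hδ0 hρ1
    exact ⟨n, hn.le⟩
  set N : ℕ := Nat.find hex with hNdef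
  have hN : ρ ^ N ≤ δ := Nat.find_spec hex
  have hN₁N : N₁ < N := by
    by_contra hcon
    push_neg at hcon
    have : ρ ^ N₁ ≤ ρ ^ N := pow_le_pow_of_le_one hρ0.le hρ1.le hcon
    linarith [hN, hδN₁]
  have hN1 : 1 ≤ N := le_trans (le_max_right N₀ 1) hN₁N.le
  have hNN₀ : N₀ ≤ N := le_trans (le_max_left N₀ 1) hN₁N.le
  have hNmin : δ < ρ ^ (N - 1) := by
    have := Nat.find_min hex (show N - 1 < N by omega)
    push_neg at this
    exact this
  have hNpos : (0:ℝ) < (N : ℝ) := by exact_mod_cast Nat.pos_of_ne_zero (by omega)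
  have hN1' : (1:ℝ) ≤ (N : ℝ) := by exact_mod_cast hN1
  -- summability
  set f : ℕ → ℝ := fun n => ρz ^ (2 * n) / ((n : ℝ) * (δ ^ 2 + (n : ℝ) ^ 2 * ρ ^ (2 * n)))
    with hfdef
  have hfnonneg : ∀ n, 0 ≤ f n := by
    intro n
    apply div_nonneg (by positivity)
    positivity
  have hsum : Summable f := by
    apply Summable.of_nonneg_of_le (f := fun n => (ρz ^ 2) ^ n / δ ^ 2) hfnonneg
    · intro n
      rcases Nat.eq_zero_or_pos n with rfl | hn
      · simp [hfdef]
        positivity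
      · have hn1 : (1:ℝ) ≤ (n:ℝ) := by exact_mod_cast hn
        have hden : δ ^ 2 ≤ (n : ℝ) * (δ ^ 2 + (n : ℝ) ^ 2 * ρ ^ (2 * n)) := by
          have h1 : δ ^ 2 ≤ (n : ℝ) * δ ^ 2 := le_mul_of_one_le_left (sq_nonneg δ) hn1
          have h2 : (n : ℝ) * δ ^ 2 ≤ (n : ℝ) * (δ ^ 2 + (n : ℝ) ^ 2 * ρ ^ (2 * n)) := by
            apply mul_le_mul_of_nonneg_left _ (by positivity)
            nlinarith [mul_nonneg (sq_nonneg (n:ℝ)) (pow_pos hρ0 (2 * n)).le]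
          linarith
        calc f n ≤ ρz ^ (2 * n) / δ ^ 2 := by
              apply div_le_div_of_nonneg_left (by positivity) (by positivity) hden
          _ = (ρz ^ 2) ^ n / δ ^ 2 := by rw [pow_mul]
    · exact (summable_geometric_of_lt_one (by positivity)
        (by nlinarith)).div_const _
  have hterm : f N ≤ ∑' n, f n := Summable.le_tsum hsum N (fun m _ => hfnonneg m)
  -- lower bound on f N
  have hρNδ : ρ ^ (2 * N) ≤ δ ^ 2 := by
    rw [two_mul, pow_add]
    have h0 : 0 ≤ ρ ^ N := (pow_pos hρ0 N).le
    nlinarith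
  have hdenom : (N : ℝ) * (δ ^ 2 + (N : ℝ) ^ 2 * ρ ^ (2 * N))
      ≤ 2 * (N : ℝ) ^ 3 * δ ^ 2 := by
    have hN3 : (N : ℝ) ≤ (N : ℝ) ^ 3 := by
      nlinarith [mul_nonneg (mul_nonneg hNpos.le (sub_nonneg.2 hN1'))
        (by linarith : (0:ℝ) ≤ (N : ℝ) + 1)]
    have e1 : (N : ℝ) ^ 3 * ρ ^ (2 * N) ≤ (N : ℝ) ^ 3 * δ ^ 2 :=
      mul_le_mul_of_nonneg_left hρNδ (by positivity)
    have e2 : (N : ℝ) * δ ^ 2 ≤ (N : ℝ) ^ 3 * δ ^ 2 :=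
      mul_le_mul_of_nonneg_right hN3 (sq_nonneg δ)
    nlinarith [e1, e2]
  have hfN : ρz ^ (2 * N) / (2 * (N : ℝ) ^ 3 * δ ^ 2) ≤ f N := by
    apply div_le_div_of_nonneg_left (by positivity) _ hdenom
    have : (0:ℝ) < δ ^ 2 + (N : ℝ) ^ 2 * ρ ^ (2 * N) := by positivity
    positivity
  -- key estimate
  have hρδ : ρ * δ ≤ ρ ^ N := by
    have : ρ * δ < ρ * ρ ^ (N - 1) := by
      exact (mul_lt_mul_iff_right₀ hρ0).2 hNmin
    have hpow : ρ * ρ ^ (N - 1) = ρ ^ N := by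
      rw [← pow_succ']
      congr 1
      omega
    linarith [this, hpow.le]
  have hkey : ρ * c ^ N / (2 * (N : ℝ) ^ 3) ≤ ρz ^ (2 * N) / (2 * (N : ℝ) ^ 3 * δ) := by
    have hxpos : (0:ℝ) < ρ ^ N := pow_pos hρ0 N
    have hcN : c ^ N = ρz ^ (2 * N) / ρ ^ N := by
      rw [hcdef, div_pow, pow_mul]
    rw [hcN, div_le_div_iff₀ (by positivity) (by positivity)]
    have hy : (0:ℝ) < ρz ^ (2 * N) := by positivity
    calc ρ * (ρz ^ (2 * N) / ρ ^ N) * (2 * (N : ℝ) ^ 3 * δ)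
        = (ρ * δ) * (2 * (N : ℝ) ^ 3) * (ρz ^ (2 * N) / ρ ^ N) := by ring
      _ ≤ ρ ^ N * (2 * (N : ℝ) ^ 3) * (ρz ^ (2 * N) / ρ ^ N) := by
          apply mul_le_mul_of_nonneg_right _ (by positivity)
          apply mul_le_mul_of_nonneg_right hρδ (by positivity)
      _ = ρz ^ (2 * N) * (2 * (N : ℝ) ^ 3) := by
          field_simp
  have hMc : M' < ρ * c ^ N / (2 * (N : ℝ) ^ 3) := by
    have hb := hN₀ N hNN₀
    have hcNpos : (0:ℝ) < c ^ N := pow_pos hc0 N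
    rw [div_lt_div_iff₀ (by positivity) (by positivity)] at hb
    rw [lt_div_iff₀ (by positivity)]
    nlinarith
  have hδf : δ * (ρz ^ (2 * N) / (2 * (N : ℝ) ^ 3 * δ ^ 2))
      = ρz ^ (2 * N) / (2 * (N : ℝ) ^ 3 * δ) := by
    field_simp
  have hfinal : ρz ^ (2 * N) / (2 * (N : ℝ) ^ 3 * δ) ≤ δ * ∑' n, f n := by
    rw [← hδf]
    apply mul_le_mul_of_nonneg_left _ hδ0.le
    exact le_trans hfN hterm
  have : M ≤ M' := le_max_left _ _
  calc M ≤ M' := this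
    _ ≤ ρ * c ^ N / (2 * (N : ℝ) ^ 3) := hMc.le
    _ ≤ ρz ^ (2 * N) / (2 * (N : ℝ) ^ 3 * δ) := hkey
    _ ≤ δ * ∑' n, f n := hfinal
end

section
/- Let 0 < ρ < 1 and 0 < ρ_z < 1 with ρ_z² ≤ ρ (i.e. |z| ≥ √(r_e³/r_i)). Then δ · Σ_{n=1}^∞ ρ_z^{2n}/(n(δ² + n² ρ^{2n})) → 0 as δ → 0⁺. -/
open Filter Set Topology

/-!
Since `ρz ^ (2 * n) ≤ ρ ^ n`, the `n`-th term of `δ * ∑'` is at most `(δ a / (δ² + a²)) / n²`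
with `a = n ρ ^ n`, hence at most `1 / (2 n²)` by AM–GM, uniformly in `δ > 0`. Each term tends
to `0` as `δ → 0`, so dominated convergence for series (Tannery's theorem) gives the limit.
-/

lemma mul_div_sq_add_sq_le_half (x y : ℝ) : x * y / (x ^ 2 + y ^ 2) ≤ 1 / 2 := by
  rcases (add_nonneg (sq_nonneg x) (sq_nonneg y)).eq_or_lt with h | h
  · simp [← h]
  · rw [div_le_iff₀ h]
    nlinarith [two_mul_le_add_sq x y]

noncomputable def dipoleTerm (ρ ρz δ : ℝ) (n : ℕ) : ℝ :=
  ρz ^ (2 * n) / (n * (δ ^ 2 + n ^ 2 * ρ ^ (2 * n)))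

lemma dipoleTerm_nonneg (ρ ρz δ : ℝ) (n : ℕ) : 0 ≤ dipoleTerm ρ ρz δ n := by
  unfold dipoleTerm
  rw [pow_mul, pow_mul]
  positivity

lemma mul_dipoleTerm_le {ρ ρz δ : ℝ} (h : ρz ^ 2 ≤ ρ) (hδ : 0 < δ) (n : ℕ) :
    δ * dipoleTerm ρ ρz δ n ≤ 1 / (n : ℝ) ^ 2 / 2 := by
  rcases n.eq_zero_or_pos with rfl | hn
  · simp [dipoleTerm]
  have hn : (0 : ℝ) < n := mod_cast hn
  calc δ * dipoleTerm ρ ρz δ n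
      ≤ δ * (ρ ^ n / (n * (δ ^ 2 + (n * ρ ^ n) ^ 2))) := by
        unfold dipoleTerm
        rw [pow_mul ρz, pow_mul' ρ, mul_pow]
        gcongr ?_ * (?_ / _)
        exact pow_le_pow_left₀ (sq_nonneg ρz) h n
    _ = 1 / (n : ℝ) ^ 2 * (δ * (n * ρ ^ n) / (δ ^ 2 + (n * ρ ^ n) ^ 2)) := by
        field_simp
    _ ≤ 1 / (n : ℝ) ^ 2 / 2 := by
        rw [div_eq_mul_one_div _ 2]
        exact mul_le_mul_of_nonneg_left (mul_div_sq_add_sq_le_half _ _) (by positivity)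

lemma tendsto_mul_dipoleTerm_zero {ρ : ℝ} (hρ : 0 < ρ) (ρz : ℝ) (n : ℕ) :
    Tendsto (fun δ => δ * dipoleTerm ρ ρz δ n) (𝓝 0) (𝓝 0) := by
  rcases n.eq_zero_or_pos with rfl | hn
  · simp [dipoleTerm]
  have hn : (0 : ℝ) < n := mod_cast hn
  have : ContinuousAt (fun δ => δ * dipoleTerm ρ ρz δ n) 0 := by
    unfold dipoleTerm
    fun_prop (disch := positivity)
  simpa using this.tendsto

theorem no_blowup_neg_k0_case_general (ρ ρz : ℝ) (hρ0 : 0 < ρ) (h : ρz ^ 2 ≤ ρ) :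
    Tendsto (fun δ : ℝ =>
        δ * ∑' n : ℕ, ρz ^ (2 * n) / ((n : ℝ) * (δ ^ 2 + (n : ℝ) ^ 2 * ρ ^ (2 * n))))
      (nhdsWithin 0 (Ioi 0)) (nhds 0) := by
  have hsum : Summable fun n : ℕ => 1 / (n : ℝ) ^ 2 / 2 :=
    (Real.summable_one_div_nat_pow.2 one_lt_two).div_const 2
  have hbound : ∀ᶠ δ in 𝓝[>] 0, ∀ n, ‖δ * dipoleTerm ρ ρz δ n‖ ≤ 1 / (n : ℝ) ^ 2 / 2 := by
    filter_upwards [self_mem_nhdsWithin] with δ (hδ : 0 < δ) n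
    rw [Real.norm_of_nonneg (mul_nonneg hδ.le (dipoleTerm_nonneg ..))]
    exact mul_dipoleTerm_le h hδ n
  have hlim := tendsto_tsum_of_dominated_convergence hsum
    (fun n => (tendsto_mul_dipoleTerm_zero hρ0 ρz n).mono_left nhdsWithin_le_nhds) hbound
  rw [tsum_zero] at hlim
  exact hlim.congr fun δ => tsum_mul_left

theorem no_blowup_neg_k0_case (ρ ρz : ℝ) (hρ0 : 0 < ρ) (hρ1 : ρ < 1)
    (hρz0 : 0 < ρz) (hρz1 : ρz < 1) (h : ρz ^ 2 ≤ ρ) :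
    Tendsto (fun δ : ℝ =>
        δ * ∑' n : ℕ, ρz ^ (2 * n) / ((n : ℝ) * (δ ^ 2 + (n : ℝ) ^ 2 * ρ ^ (2 * n))))
      (nhdsWithin 0 (Ioi 0)) (nhds 0) :=
  no_blowup_neg_k0_case_general ρ ρz hρ0 h
end
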